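/- arXiv:1110.4938 — 2 statements merged into one kernel-verified Lean document; each statement's English description precedes it below -/
import Mathlib

section
/- For every z in the open unit disc 𝔻 one has Kμ(z) ≠ 0 and the characteristic function θ of the completely non-unitary contraction Û₀ satisfies θ(z)·Kμ(z) = z·K(ξ̄μ)(z); equivalently, θ(z) equals z times the normalized Cauchy transform K(ξ̄μ)(z)/Kμ(z). -/
open MeasureTheory Filter ContinuousLinearMap
open scoped ENNReal Topology ComplexConjugate

noncomputable section

/-- The Cauchy transform `K(fτ)(z) = ∫ f(ξ)/(1 - conj(ξ) z) dτ(ξ)` of the measure `fτ`. -/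
def cauchyT (τ : Measure ℂ) (f : ℂ → ℂ) (z : ℂ) : ℂ :=
  ∫ ξ, f ξ / (1 - conj ξ * z) ∂τ

/-- The function `ξ ↦ conj ξ`. -/
def xibarFun : ℂ → ℂ := fun ξ => conj ξ

/-- The constant function `1`. -/
def oneFun : ℂ → ℂ := fun _ => 1

/-- The operator `Û_γ = M_ξ + (γ - 1)⟨·, ξ̄⟩1` on `L²(μ)`, where `Mxi` is multiplication by
the independent variable, `xibar` is the function `ξ ↦ conj ξ` and `one` is the constant
function `1`.  (Here `⟨f, ξ̄⟩ = ∫ f(ξ) ξ dμ(ξ)` is linear in `f`.) -/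
def clarkOp (μ : Measure ℂ) (Mxi : Lp ℂ 2 μ →L[ℂ] Lp ℂ 2 μ) (xibar one : Lp ℂ 2 μ)
    (γ : ℂ) : Lp ℂ 2 μ →L[ℂ] Lp ℂ 2 μ :=
  Mxi + (γ - 1) • ((innerSL ℂ xibar).smulRight one)

/-- The scalar characteristic function
`θ(z) = ⟨(-U + z D₊ (I - z U*)⁻¹ D) ξ̄, 1⟩` of a contraction `U` on `L²(μ)` with defect
operators `Dm = (I - U*U)^{1/2}` and `Ds = (I - U U*)^{1/2}`. -/
def charF {μ : Measure ℂ} (U Dm Ds : Lp ℂ 2 μ →L[ℂ] Lp ℂ 2 μ) (xibar one : Lp ℂ 2 μ)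
    (z : ℂ) : ℂ :=
  inner ℂ one ((-U + z • (Ds ∘L Ring.inverse (1 - z • ContinuousLinearMap.adjoint U) ∘L Dm))
    xibar)

/-- `T^{(k)}`: nonnegative powers of `T`; powers of the adjoint for negative `k`. -/
def zpowOp {E : Type*} [NormedAddCommGroup E] [InnerProductSpace ℂ E] [CompleteSpace E]
    (T : E →L[ℂ] E) (k : ℤ) : E →L[ℂ] E :=
  if 0 ≤ k then T ^ k.toNat else (ContinuousLinearMap.adjoint T) ^ (-k).toNat

/-- Normalized Lebesgue (arclength) measure on the unit circle `𝕋`, as a measure on `ℂ`. -/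
def mCircle : Measure ℂ :=
  (ENNReal.ofReal (2 * Real.pi))⁻¹ •
    (volume.restrict (Set.Ioc (0:ℝ) (2 * Real.pi))).map (circleMap 0 1)

/-- A function on the disc is *inner* if its radial limits exist and have modulus one at
`m`-almost every point of the unit circle. -/
def IsInnerFun (f : ℂ → ℂ) : Prop :=
  ∀ᵐ ξ ∂mCircle, ∃ L : ℂ,
    Tendsto (fun r : ℝ => f ((r : ℂ) * ξ)) (𝓝[<] (1:ℝ)) (𝓝 L) ∧ ‖L‖ = 1

/-!
Write `M = M_ξ`, `x = ξ̄`, so that `M x = 1` and `Û₀ = M - rankOne (M x) x = M ∘ (I - rankOne x x)`: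
an isometry composed with an orthogonal projection. Hence `Û₀` is a contraction with `Û₀ x = 0`
and `Û₀* (M x) = 0`, so the defect operators fix `x` and `1`, and
`θ(z) = z ⟪1, (I - z Û₀*)⁻¹ x⟫`. The adjoint `M*` is multiplication by `ξ̄`, so
`h = ξ̄ / (1 - ξ̄ z)` solves `(I - z M*) h = x` and `⟪1, h⟫ = K(ξ̄μ)(z)`; the rank-one correction
turns it into `(I - z Û₀*)⁻¹ x = (1 + z K(ξ̄μ)(z))⁻¹ h`, and `1 + z K(ξ̄μ)(z) = Kμ(z)`, whose real
part is at least `1/2` because `w ↦ (1 - w)⁻¹` maps the unit disc into `Re > 1/2`.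
-/
open InnerProductSpace
open scoped InnerProductSpace

section IsometrySubRankOne

variable {𝕜 E : Type*} [RCLike 𝕜] [NormedAddCommGroup E] [InnerProductSpace 𝕜 E]

theorem ContinuousLinearMap.IsPositive.apply_eq_self_of_comp_self_eq_one_sub {D A : E →L[𝕜] E}
    (hD : D.IsPositive) (hDA : D ∘L D = 1 - A) {x : E} (hAx : A x = 0) : D x = x := by
  have hx : D (D x) = x := by
    rw [← comp_apply, hDA, sub_apply, one_apply_eq_self, hAx, sub_zero]
  have hy : D (D x - x) = -(D x - x) := by rw [map_sub, hx, neg_sub]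
  have h := hD.re_inner_nonneg_left (D x - x)
  rw [hy, inner_neg_left, map_neg, inner_self_eq_norm_sq, neg_nonneg] at h
  exact sub_eq_zero.mp (norm_eq_zero.mp (by nlinarith [norm_nonneg (D x - x)]))

theorem isUnit_one_sub_smul_of_norm_le_one [CompleteSpace E] {T : E →L[𝕜] E} (hT : ‖T‖ ≤ 1)
    {z : 𝕜} (hz : ‖z‖ < 1) : IsUnit (1 - z • T) := by
  have hzT : ‖z • T‖ < 1 := by
    rw [norm_smul]
    nlinarith [norm_nonneg z, norm_nonneg T]
  simpa using (Units.oneSub _ hzT).isUnit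

variable (M : E →L[𝕜] E) {x : E}

theorem sub_rankOne_map_self_apply_self (hx : ‖x‖ = 1) : (M - rankOne 𝕜 (M x) x) x = 0 := by
  simp [inner_self_eq_norm_sq_to_K, hx]

theorem adjoint_sub_rankOne_map_self [CompleteSpace E] (x : E) :
    adjoint (M - rankOne 𝕜 (M x) x) = adjoint M - rankOne 𝕜 x (M x) := by
  simp [map_sub]

variable {M}

theorem adjoint_sub_rankOne_map_self_apply_map_self [CompleteSpace E]
    (hM : ∀ f, ‖M f‖ = ‖f‖) (hx : ‖x‖ = 1) : adjoint (M - rankOne 𝕜 (M x) x) (M x) = 0 := by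
  have hMM : adjoint M (M x) = x := by
    simpa using congr($((norm_map_iff_adjoint_comp_self M).mp hM) x)
  simp [adjoint_sub_rankOne_map_self, hMM, inner_self_eq_norm_sq_to_K, hM, hx]

theorem norm_sub_rankOne_map_self_le_one [CompleteSpace E] (hM : ∀ f, ‖M f‖ = ‖f‖)
    (hx : ‖x‖ = 1) : ‖M - rankOne 𝕜 (M x) x‖ ≤ 1 := by
  have hP : ‖1 - rankOne 𝕜 x x‖ ≤ 1 := (isStarProjection_rankOne_self hx).one_sub.norm_le
  have hM1 : ‖M‖ ≤ 1 := opNorm_le_bound _ zero_le_one fun f => by rw [hM, one_mul]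
  calc ‖M - rankOne 𝕜 (M x) x‖ = ‖M ∘L (1 - rankOne 𝕜 x x)‖ := by
        rw [comp_sub, comp_rankOne, ← mul_def, mul_one]
    _ ≤ ‖M‖ * ‖1 - rankOne 𝕜 x x‖ := opNorm_comp_le _ _
    _ ≤ 1 := mul_le_one₀ hM1 (norm_nonneg _) hP

theorem one_sub_smul_adjoint_sub_rankOne_apply [CompleteSpace E] {z : 𝕜} {h : E}
    (hh : (1 - z • adjoint M) h = x) (ha : 1 + z * ⟪M x, h⟫_𝕜 ≠ 0) :
    (1 - z • adjoint (M - rankOne 𝕜 (M x) x)) ((1 + z * ⟪M x, h⟫_𝕜)⁻¹ • h) = x := by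
  have key : (1 - z • adjoint (M - rankOne 𝕜 (M x) x)) h = (1 + z * ⟪M x, h⟫_𝕜) • x := by
    simp only [adjoint_sub_rankOne_map_self, sub_apply, smul_apply, rankOne_apply] at hh ⊢
    rw [← hh]
    module
  rw [map_smul, key, smul_smul, inv_mul_cancel₀ ha, one_smul]

end IsometrySubRankOne

theorem clarkOp_zero {μ : Measure ℂ} (M : Lp ℂ 2 μ →L[ℂ] Lp ℂ 2 μ) (x e : Lp ℂ 2 μ) :
    clarkOp μ M x e 0 = M - rankOne ℂ e x := by
  rw [clarkOp, zero_sub, neg_one_smul, ← sub_eq_add_neg, rankOne_def]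

theorem charF_eq_mul_inner {μ : Measure ℂ} {U Dm Ds : Lp ℂ 2 μ →L[ℂ] Lp ℂ 2 μ}
    {x e g : Lp ℂ 2 μ} {z : ℂ} (hUx : U x = 0) (hDm : Dm x = x) (hDs : IsSelfAdjoint Ds)
    (hDse : Ds e = e) (hunit : IsUnit (1 - z • adjoint U)) (hg : (1 - z • adjoint U) g = x) :
    charF U Dm Ds x e z = z * ⟪e, g⟫_ℂ := by
  have hres : Ring.inverse (1 - z • adjoint U) x = g := by
    simpa [← hg] using congr($(Ring.inverse_mul_cancel _ hunit) g)
  rw [charF, add_apply, neg_apply, smul_apply, comp_apply, comp_apply, hDm, hres, hUx,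
    inner_add_right, inner_neg_right, inner_zero_right, neg_zero, zero_add, inner_smul_right,
    ← hDs.adjoint_eq, adjoint_inner_right, hDse]

section CauchyKernel

variable {ξ z : ℂ}

theorem sub_norm_le_norm_one_sub_conj_mul (hξ : ‖ξ‖ = 1) : 1 - ‖z‖ ≤ ‖1 - conj ξ * z‖ := by
  simpa [hξ] using norm_sub_norm_le (1 : ℂ) (conj ξ * z)

theorem one_sub_conj_mul_ne_zero (hξ : ‖ξ‖ = 1) (hz : ‖z‖ < 1) : 1 - conj ξ * z ≠ 0 :=
  norm_pos_iff.mp ((sub_pos.mpr hz).trans_le (sub_norm_le_norm_one_sub_conj_mul hξ))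

theorem norm_div_one_sub_conj_mul_le (hξ : ‖ξ‖ = 1) (hz : ‖z‖ < 1) (w : ℂ) :
    ‖w / (1 - conj ξ * z)‖ ≤ (1 - ‖z‖)⁻¹ * ‖w‖ := by
  rw [norm_div, div_eq_inv_mul]
  gcongr
  exact sub_norm_le_norm_one_sub_conj_mul hξ

theorem half_le_re_inv_one_sub {w : ℂ} (hw : ‖w‖ ≤ 1) (hw1 : w ≠ 1) :
    1 / 2 ≤ ((1 - w)⁻¹).re := by
  have hpos : 0 < Complex.normSq (1 - w) := Complex.normSq_pos.mpr (sub_ne_zero.mpr hw1.symm)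
  have hw2 : Complex.normSq w ≤ 1 := by
    rw [Complex.normSq_eq_norm_sq]
    nlinarith [norm_nonneg w]
  rw [Complex.normSq_apply] at hw2
  rw [Complex.inv_re, le_div_iff₀ hpos, Complex.normSq_apply]
  simp only [Complex.sub_re, Complex.one_re, Complex.sub_im, Complex.one_im]
  nlinarith

end CauchyKernel

section CircleMeasure

variable {μ : Measure ℂ}

theorem ae_norm_eq_one_of_measure_sphere_compl (hμ : μ (Metric.sphere (0 : ℂ) 1)ᶜ = 0) :
    ∀ᵐ ξ ∂μ, ‖ξ‖ = 1 := by
  filter_upwards [mem_ae_iff.mpr hμ] with ξ hξ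
  simpa using hξ

theorem MeasureTheory.MemLp.div_one_sub_conj_mul {p : ℝ≥0∞} {f : ℂ → ℂ}
    (hμ : ∀ᵐ ξ ∂μ, ‖ξ‖ = 1) {z : ℂ} (hz : ‖z‖ < 1) (hf : MemLp f p μ) :
    MemLp (fun ξ => f ξ / (1 - conj ξ * z)) p μ :=
  have hk : Continuous fun ξ : ℂ => 1 - conj ξ * z := by fun_prop
  hf.of_le_mul (hf.aestronglyMeasurable.div₀ hk.aestronglyMeasurable)
    (by filter_upwards [hμ] with ξ hξ using norm_div_one_sub_conj_mul_le hξ hz _)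

theorem MeasureTheory.MemLp.conj_mul {p : ℝ≥0∞} {f : ℂ → ℂ} (hμ : ∀ᵐ ξ ∂μ, ‖ξ‖ = 1)
    (hf : MemLp f p μ) : MemLp (fun ξ => conj ξ * f ξ) p μ :=
  hf.of_le_mul (c := 1)
    (Complex.continuous_conj.aestronglyMeasurable.mul hf.aestronglyMeasurable)
    (by filter_upwards [hμ] with ξ hξ; simp [hξ])

theorem memLp_xibarFun [IsFiniteMeasure μ] {p : ℝ≥0∞} (hμ : ∀ᵐ ξ ∂μ, ‖ξ‖ = 1) :
    MemLp xibarFun p μ :=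
  MemLp.of_bound Complex.continuous_conj.aestronglyMeasurable 1
    (by filter_upwards [hμ] with ξ hξ; simp [xibarFun, hξ])

section ProbabilityMeasure

variable [IsProbabilityMeasure μ] {z : ℂ}

theorem cauchyT_oneFun_sub_mul_cauchyT_xibarFun (hμ : ∀ᵐ ξ ∂μ, ‖ξ‖ = 1) (hz : ‖z‖ < 1) :
    cauchyT μ oneFun z - z * cauchyT μ xibarFun z = 1 := by
  have hone : Integrable (fun ξ => oneFun ξ / (1 - conj ξ * z)) μ :=
    memLp_one_iff_integrable.mp ((memLp_const (1 : ℂ)).div_one_sub_conj_mul hμ hz)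
  have hxibar : Integrable (fun ξ => xibarFun ξ / (1 - conj ξ * z)) μ :=
    memLp_one_iff_integrable.mp ((memLp_xibarFun hμ).div_one_sub_conj_mul hμ hz)
  rw [cauchyT, cauchyT, ← integral_const_mul, ← integral_sub hone (hxibar.const_mul z)]
  calc _ = ∫ _, (1 : ℂ) ∂μ := integral_congr_ae <| by
        filter_upwards [hμ] with ξ hξ
        have := one_sub_conj_mul_ne_zero hξ hz
        simp only [oneFun, xibarFun]
        field_simp
    _ = 1 := by simp

theorem half_le_re_cauchyT_oneFun (hμ : ∀ᵐ ξ ∂μ, ‖ξ‖ = 1) (hz : ‖z‖ < 1) :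
    1 / 2 ≤ (cauchyT μ oneFun z).re := by
  have hone : Integrable (fun ξ => oneFun ξ / (1 - conj ξ * z)) μ :=
    memLp_one_iff_integrable.mp ((memLp_const (1 : ℂ)).div_one_sub_conj_mul hμ hz)
  rw [cauchyT, ← RCLike.re_to_complex, ← integral_re hone]
  calc (1 / 2 : ℝ) = ∫ _, (1 / 2 : ℝ) ∂μ := by simp
    _ ≤ _ := integral_mono_ae (integrable_const _) hone.re <| by
      filter_upwards [hμ] with ξ hξ
      simpa [oneFun] using half_le_re_inv_one_sub (w := conj ξ * z) (by simp [hξ, hz.le])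
        (sub_ne_zero.mp (one_sub_conj_mul_ne_zero hξ hz)).symm

theorem cauchyT_oneFun_ne_zero (hμ : ∀ᵐ ξ ∂μ, ‖ξ‖ = 1) (hz : ‖z‖ < 1) :
    cauchyT μ oneFun z ≠ 0 := fun h => by
  have := half_le_re_cauchyT_oneFun hμ hz
  rw [h, Complex.zero_re] at this
  norm_num at this

end ProbabilityMeasure

end CircleMeasure

section MultiplicationOperator

variable {μ : Measure ℂ}

theorem MeasureTheory.L2.inner_eq_integral_conj_mul (f g : Lp ℂ 2 μ) :
    ⟪f, g⟫_ℂ = ∫ ξ, conj (f ξ) * g ξ ∂μ := by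
  simp only [L2.inner_def, RCLike.inner_apply, mul_comm]

theorem norm_map_of_ae_apply_eq_mul (hμ : ∀ᵐ ξ ∂μ, ‖ξ‖ = 1) {M : Lp ℂ 2 μ →L[ℂ] Lp ℂ 2 μ}
    (hM : ∀ f : Lp ℂ 2 μ, ∀ᵐ ξ ∂μ, M f ξ = ξ * f ξ) (f : Lp ℂ 2 μ) : ‖M f‖ = ‖f‖ := by
  rw [Lp.norm_def, Lp.norm_def]
  congr 1
  refine eLpNorm_congr_norm_ae ?_
  filter_upwards [hM f, hμ] with ξ h hξ
  rw [h, norm_mul, hξ, one_mul]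

theorem norm_eq_one_of_ae_eq_conj [IsProbabilityMeasure μ] (hμ : ∀ᵐ ξ ∂μ, ‖ξ‖ = 1)
    {x : Lp ℂ 2 μ} (hx : ∀ᵐ ξ ∂μ, x ξ = conj ξ) : ‖x‖ = 1 := by
  have h1 : eLpNorm x 2 μ = eLpNorm (fun _ => (1 : ℂ)) 2 μ := eLpNorm_congr_norm_ae <| by
    filter_upwards [hx, hμ] with ξ h hξ
    simp [h, hξ]
  rw [Lp.norm_def, h1, eLpNorm_const _ two_ne_zero (IsProbabilityMeasure.ne_zero μ)]
  simp

theorem apply_eq_of_ae_eq_conj (hμ : ∀ᵐ ξ ∂μ, ‖ξ‖ = 1) {M : Lp ℂ 2 μ →L[ℂ] Lp ℂ 2 μ}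
    (hM : ∀ f : Lp ℂ 2 μ, ∀ᵐ ξ ∂μ, M f ξ = ξ * f ξ) {one xibar : Lp ℂ 2 μ}
    (hone : ∀ᵐ ξ ∂μ, one ξ = 1) (hxibar : ∀ᵐ ξ ∂μ, xibar ξ = conj ξ) : M xibar = one := by
  refine Lp.ext ?_
  filter_upwards [hM xibar, hxibar, hone, hμ] with ξ hMξ hxξ hoξ hξ
  rw [hMξ, hxξ, hoξ, Complex.mul_conj, Complex.normSq_eq_norm_sq, hξ]
  norm_num

theorem adjoint_apply_eq_of_ae_eq_conj_mul {M : Lp ℂ 2 μ →L[ℂ] Lp ℂ 2 μ}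
    (hM : ∀ f : Lp ℂ 2 μ, ∀ᵐ ξ ∂μ, M f ξ = ξ * f ξ) {h k : Lp ℂ 2 μ}
    (hk : ∀ᵐ ξ ∂μ, k ξ = conj ξ * h ξ) : adjoint M h = k := by
  refine ext_inner_left ℂ fun f => ?_
  rw [adjoint_inner_right, L2.inner_eq_integral_conj_mul, L2.inner_eq_integral_conj_mul]
  refine integral_congr_ae ?_
  filter_upwards [hM f, hk] with ξ hf hk
  rw [hf, hk, map_mul]
  ring

theorem exists_one_sub_smul_adjoint_apply_eq [IsProbabilityMeasure μ]
    (hμ : ∀ᵐ ξ ∂μ, ‖ξ‖ = 1) {M : Lp ℂ 2 μ →L[ℂ] Lp ℂ 2 μ}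
    (hM : ∀ f : Lp ℂ 2 μ, ∀ᵐ ξ ∂μ, M f ξ = ξ * f ξ) {one xibar : Lp ℂ 2 μ}
    (hone : ∀ᵐ ξ ∂μ, one ξ = 1) (hxibar : ∀ᵐ ξ ∂μ, xibar ξ = conj ξ) {z : ℂ} (hz : ‖z‖ < 1) :
    ∃ h : Lp ℂ 2 μ, (1 - z • adjoint M) h = xibar ∧ ⟪one, h⟫_ℂ = cauchyT μ xibarFun z := by
  have hmem : MemLp (fun ξ => xibarFun ξ / (1 - conj ξ * z)) 2 μ :=
    (memLp_xibarFun hμ).div_one_sub_conj_mul hμ hz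
  set h := hmem.toLp _
  have hh := hmem.coeFn_toLp
  set k := (hmem.conj_mul hμ).toLp _
  have hk := (hmem.conj_mul hμ).coeFn_toLp
  have hadj : adjoint M h = k := adjoint_apply_eq_of_ae_eq_conj_mul hM <| by
    filter_upwards [hk, hh] with ξ hk hh
    rw [hk, hh]
  refine ⟨h, ?_, ?_⟩
  · rw [sub_apply, smul_apply, hadj, one_apply_eq_self]
    refine Lp.ext ?_
    filter_upwards [Lp.coeFn_sub h (z • k), Lp.coeFn_smul z k, hh, hk, hxibar, hμ]
      with ξ hsub hsmul hh hk hxibar hξ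
    have := one_sub_conj_mul_ne_zero hξ hz
    rw [hsub, Pi.sub_apply, hsmul, Pi.smul_apply, hk, hh, hxibar, smul_eq_mul, xibarFun]
    field_simp
  · rw [L2.inner_eq_integral_conj_mul, cauchyT]
    refine integral_congr_ae ?_
    filter_upwards [hone, hh] with ξ hone hh
    rw [hone, hh, map_one, one_mul]

end MultiplicationOperator

theorem statement5
    (μ : Measure ℂ) [IsProbabilityMeasure μ] (hμ : μ (Metric.sphere (0:ℂ) 1)ᶜ = 0)
    (Mxi : Lp ℂ 2 μ →L[ℂ] Lp ℂ 2 μ)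
    (hMxi : ∀ f : Lp ℂ 2 μ, ∀ᵐ ξ ∂μ, (Mxi f) ξ = ξ * f ξ)
    (one xibar : Lp ℂ 2 μ)
    (hone : ∀ᵐ ξ ∂μ, one ξ = 1) (hxibar : ∀ᵐ ξ ∂μ, xibar ξ = conj ξ)
    -- `D0` and `Ds0` are the positive square roots of `I - Û₀* Û₀` and `I - Û₀ Û₀*`
    (D0 Ds0 : Lp ℂ 2 μ →L[ℂ] Lp ℂ 2 μ)
    (hD0pos : D0.IsPositive)
    (hD0 : D0 ∘L D0 = 1 - ContinuousLinearMap.adjoint (clarkOp μ Mxi xibar one 0) ∘L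
      clarkOp μ Mxi xibar one 0)
    (hDs0pos : Ds0.IsPositive)
    (hDs0 : Ds0 ∘L Ds0 = 1 - clarkOp μ Mxi xibar one 0 ∘L
      ContinuousLinearMap.adjoint (clarkOp μ Mxi xibar one 0))
    (z : ℂ) (hz : ‖z‖ < 1) :
    cauchyT μ oneFun z ≠ 0 ∧
    charF (clarkOp μ Mxi xibar one 0) D0 Ds0 xibar one z * cauchyT μ oneFun z =
      z * cauchyT μ xibarFun z := by
  have hμ1 := ae_norm_eq_one_of_measure_sphere_compl hμ
  have hM := norm_map_of_ae_apply_eq_mul hμ1 hMxi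
  have hx := norm_eq_one_of_ae_eq_conj hμ1 hxibar
  obtain ⟨h, hres, hinner⟩ := exists_one_sub_smul_adjoint_apply_eq hμ1 hMxi hone hxibar hz
  have hK : 1 + z * ⟪one, h⟫_ℂ = cauchyT μ oneFun z := by
    rw [hinner]
    linear_combination (cauchyT_oneFun_sub_mul_cauchyT_xibarFun hμ1 hz).symm
  have hK0 := cauchyT_oneFun_ne_zero hμ1 hz
  obtain rfl := apply_eq_of_ae_eq_conj hμ1 hMxi hone hxibar
  rw [clarkOp_zero] at hD0 hDs0 ⊢
  have hD0x : D0 xibar = xibar := hD0pos.apply_eq_self_of_comp_self_eq_one_sub hD0 <| by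
    rw [comp_apply, sub_rankOne_map_self_apply_self Mxi hx, map_zero]
  have hDs0e : Ds0 (Mxi xibar) = Mxi xibar :=
    hDs0pos.apply_eq_self_of_comp_self_eq_one_sub hDs0 <| by
      rw [comp_apply, adjoint_sub_rankOne_map_self_apply_map_self hM hx, map_zero]
  have hunit : IsUnit (1 - z • adjoint (Mxi - rankOne ℂ (Mxi xibar) xibar)) :=
    isUnit_one_sub_smul_of_norm_le_one
      (by rw [LinearIsometryEquiv.norm_map]; exact norm_sub_rankOne_map_self_le_one hM hx) hz
  refine ⟨hK0, ?_⟩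
  rw [charF_eq_mul_inner (sub_rankOne_map_self_apply_self Mxi hx) hD0x hDs0pos.isSelfAdjoint
    hDs0e hunit (one_sub_smul_adjoint_sub_rankOne_apply hres (hK ▸ hK0)), inner_smul_right, hK,
    hinner]
  field_simp
end
end

section
/- For every γ ∈ 𝕋 and every z ∈ ℂ∖𝕋, the normalized Cauchy transforms of ξ̄μ and ξ̄μ_γ satisfy K(ξ̄μ)(z)·Kμ_γ(z) = γ·K(ξ̄μ_γ)(z)·Kμ(z); that is, K(ξ̄μ)/Kμ = γ·K(ξ̄μ_γ)/Kμ_γ wherever the denominators are nonzero. -/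
/-! Write `Û = Û_γ`. For `|ζ| < 1` the vector `h = (1 - ζÛ)⁻¹ 1` satisfies
`h - ζ (ξ h + (γ - 1)⟨h, ξ̄⟩) = 1`, so `h = a / (1 - ξζ)` in `L²(μ)` for a constant `a`.
Expanding the resolvent in powers of `Û`, the moments of `μ_γ` give
`⟨h, 1⟩ = ∫ dμ_γ / (1 - ξζ)` and `⟨Û h, 1⟩ = ∫ ξ dμ_γ / (1 - ξζ)`, while `⟨Û f, 1⟩ = γ ⟨f, ξ̄⟩`.
Hence the two `μ_γ`-integrals are `a` and `γ a` times the corresponding `μ`-integrals. Inside the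
disc the identity is the complex conjugate of this at `ζ = z̄`; outside it, both Cauchy transforms
are expressed through the same integrals at `ζ = 1/z`, and `a` is eliminated using
`a = 1 + ζ (γ - 1) a ∫ ξ dμ / (1 - ξζ)`. -/

open MeasureTheory Filter ContinuousLinearMap
open scoped ENNReal Topology ComplexConjugate

noncomputable section

open scoped InnerProductSpace

lemma ae_norm_eq_one_of_measure_compl_sphere {τ : Measure ℂ}
    (hτ : τ (Metric.sphere (0 : ℂ) 1)ᶜ = 0) : ∀ᵐ ξ ∂τ, ‖ξ‖ = 1 :=
  (ae_iff.mpr hτ).mono fun _ hξ => mem_sphere_zero_iff_norm.mp hξ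

section CircleIntegrals

variable {τ : Measure ℂ} {ζ : ℂ}

lemma one_sub_mul_ne_zero_of_norm_eq_one {ξ : ℂ} (hξ : ‖ξ‖ = 1) (hζ : ‖ζ‖ < 1) :
    1 - ξ * ζ ≠ 0 := by
  refine sub_ne_zero.mpr fun h => ?_
  have := congrArg norm h
  rw [norm_one, norm_mul, hξ, one_mul] at this
  linarith

lemma hasSum_integral_pow_mul_inv_one_sub [IsFiniteMeasure τ] (hτ : ∀ᵐ ξ ∂τ, ‖ξ‖ = 1)
    (hζ : ‖ζ‖ < 1) (k : ℕ) :
    HasSum (fun n : ℕ => ζ ^ n * ∫ ξ, ξ ^ (k + n) ∂τ) (∫ ξ, ξ ^ k * (1 - ξ * ζ)⁻¹ ∂τ) := by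
  have hterm : ∀ n : ℕ, ∫ ξ, ξ ^ k * (ξ * ζ) ^ n ∂τ = ζ ^ n * ∫ ξ, ξ ^ (k + n) ∂τ := by
    intro n
    rw [← integral_const_mul]
    congr 1 with ξ
    ring
  simp_rw [← hterm]
  refine hasSum_integral_of_dominated_convergence (fun n _ => ‖ζ‖ ^ n)
    (fun n => by fun_prop) (fun n => ?_) (.of_forall fun _ => summable_geometric_of_lt_one
      (norm_nonneg ζ) hζ) (integrable_const _) ?_
  · filter_upwards [hτ] with ξ hξ
    simp [norm_pow, hξ]
  · filter_upwards [hτ] with ξ hξ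
    refine (hasSum_geometric_of_norm_lt_one ?_).mul_left (ξ ^ k)
    rwa [norm_mul, hξ, one_mul]

lemma norm_inv_one_sub_mul_le {ξ : ℂ} (hξ : ‖ξ‖ = 1) (hζ : ‖ζ‖ < 1) :
    ‖(1 - ξ * ζ)⁻¹‖ ≤ (1 - ‖ζ‖)⁻¹ := by
  rw [norm_inv]
  refine inv_anti₀ (by linarith) ?_
  simpa [norm_mul, hξ] using norm_sub_norm_le (1 : ℂ) (ξ * ζ)

lemma integrable_inv_one_sub_mul [IsFiniteMeasure τ] (hτ : ∀ᵐ ξ ∂τ, ‖ξ‖ = 1)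
    (hζ : ‖ζ‖ < 1) : Integrable (fun ξ => (1 - ξ * ζ)⁻¹) τ :=
  (integrable_const (1 - ‖ζ‖)⁻¹).mono' (by fun_prop)
    (hτ.mono fun _ hξ => norm_inv_one_sub_mul_le hξ hζ)

lemma mul_integral_mul_inv_one_sub [IsProbabilityMeasure τ] (hτ : ∀ᵐ ξ ∂τ, ‖ξ‖ = 1)
    (hζ : ‖ζ‖ < 1) :
    ζ * ∫ ξ, ξ * (1 - ξ * ζ)⁻¹ ∂τ = (∫ ξ, (1 - ξ * ζ)⁻¹ ∂τ) - 1 := by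
  have hpt : ∀ᵐ ξ ∂τ, ζ * (ξ * (1 - ξ * ζ)⁻¹) = (1 - ξ * ζ)⁻¹ - 1 := by
    filter_upwards [hτ] with ξ hξ
    linear_combination -mul_inv_cancel₀ (one_sub_mul_ne_zero_of_norm_eq_one hξ hζ)
  rw [← integral_const_mul, integral_congr_ae hpt,
    integral_sub (integrable_inv_one_sub_mul hτ hζ) (integrable_const 1)]
  simp

end CircleIntegrals

section CauchyTransform

variable (τ : Measure ℂ) (z : ℂ)

lemma cauchyT_oneFun_eq_conj :
    cauchyT τ oneFun z = conj (∫ ξ, (1 - ξ * conj z)⁻¹ ∂τ) := by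
  rw [← integral_conj]
  simp [cauchyT, oneFun]

lemma cauchyT_xibarFun_eq_conj :
    cauchyT τ xibarFun z = conj (∫ ξ, ξ * (1 - ξ * conj z)⁻¹ ∂τ) := by
  rw [← integral_conj]
  simp [cauchyT, xibarFun, div_eq_mul_inv]

variable {τ z}

lemma inv_one_sub_conj_mul_eq {ξ : ℂ} (hξ : ‖ξ‖ = 1) (hz : 1 < ‖z‖) :
    (1 - conj ξ * z)⁻¹ = 1 - (1 - ξ * z⁻¹)⁻¹ ∧
      conj ξ * (1 - conj ξ * z)⁻¹ = -z⁻¹ * (1 - ξ * z⁻¹)⁻¹ := by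
  have hξ0 : ξ ≠ 0 := norm_ne_zero_iff.mp (by simp [hξ])
  have hz0 : z ≠ 0 := norm_ne_zero_iff.mp (by linarith)
  have hξz : ξ - z ≠ 0 := sub_ne_zero.mpr fun h => by rw [h] at hξ; linarith
  have hzξ : z - ξ ≠ 0 := sub_ne_zero.mpr fun h => hξz (by rw [h, sub_self])
  rw [← Complex.inv_eq_conj hξ]
  constructor <;> field_simp <;> ring

lemma cauchyT_oneFun_eq_one_sub [IsProbabilityMeasure τ] (hτ : ∀ᵐ ξ ∂τ, ‖ξ‖ = 1)
    (hz : 1 < ‖z‖) : cauchyT τ oneFun z = 1 - ∫ ξ, (1 - ξ * z⁻¹)⁻¹ ∂τ := by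
  have hz' : ‖z⁻¹‖ < 1 := by rw [norm_inv]; exact inv_lt_one_of_one_lt₀ hz
  have hsub := integral_sub (integrable_const (1 : ℂ)) (integrable_inv_one_sub_mul hτ hz')
  rw [integral_const, probReal_univ, one_smul] at hsub
  rw [← hsub]
  refine integral_congr_ae ?_
  filter_upwards [hτ] with ξ hξ
  simpa [oneFun] using (inv_one_sub_conj_mul_eq hξ hz).1

lemma cauchyT_xibarFun_eq_neg_inv_mul (hτ : ∀ᵐ ξ ∂τ, ‖ξ‖ = 1) (hz : 1 < ‖z‖) :
    cauchyT τ xibarFun z = -z⁻¹ * ∫ ξ, (1 - ξ * z⁻¹)⁻¹ ∂τ := by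
  rw [← integral_const_mul]
  refine integral_congr_ae ?_
  filter_upwards [hτ] with ξ hξ
  simpa [xibarFun, div_eq_mul_inv] using (inv_one_sub_conj_mul_eq hξ hz).2

end CauchyTransform

lemma inner_pow_tsum_geom_apply_eq_integral {E : Type*} [NormedAddCommGroup E]
    [InnerProductSpace ℂ E] [CompleteSpace E] {T : E →L[ℂ] E} (hT : ‖T‖ ≤ 1) {v : E}
    {τ : Measure ℂ} [IsFiniteMeasure τ] (hτ : ∀ᵐ ξ ∂τ, ‖ξ‖ = 1)
    (hmom : ∀ n : ℕ, ⟪v, (T ^ n) v⟫_ℂ = ∫ ξ, ξ ^ n ∂τ) {ζ : ℂ} (hζ : ‖ζ‖ < 1) (k : ℕ) :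
    ⟪v, (T ^ k) ((∑' n : ℕ, (ζ • T) ^ n) v)⟫_ℂ = ∫ ξ, ξ ^ k * (1 - ξ * ζ)⁻¹ ∂τ := by
  have hζT : ‖ζ • T‖ < 1 :=
    (norm_smul_le ζ T).trans_lt (by nlinarith [norm_nonneg ζ, norm_nonneg T])
  have hsum := (summable_geometric_of_norm_lt_one hζT).hasSum.mapL
    ((innerSL ℂ v).comp ((T ^ k).comp (ContinuousLinearMap.apply ℂ E v)))
  have hterm : ∀ n : ℕ, ⟪v, (T ^ k) (((ζ • T) ^ n) v)⟫_ℂ = ζ ^ n * ∫ ξ, ξ ^ (k + n) ∂τ := by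
    intro n
    rw [← hmom, smul_pow, pow_add]
    simp
  simp only [ContinuousLinearMap.comp_apply, ContinuousLinearMap.apply_apply, innerSL_apply_apply,
    hterm] at hsum
  exact hsum.unique (hasSum_integral_pow_mul_inv_one_sub hτ hζ k)

section ClarkOperator

variable {μ : Measure ℂ} {Mxi : Lp ℂ 2 μ →L[ℂ] Lp ℂ 2 μ} {one xibar : Lp ℂ 2 μ} {γ : ℂ}

lemma inner_eq_integral_of_ae_eq_one (hone : ∀ᵐ ξ ∂μ, one ξ = 1) (f : Lp ℂ 2 μ) :
    ⟪one, f⟫_ℂ = ∫ ξ, f ξ ∂μ := by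
  rw [L2.inner_def]
  refine integral_congr_ae ?_
  filter_upwards [hone] with ξ h
  simp [h]

lemma inner_eq_integral_mul_of_ae_eq_conj (hxibar : ∀ᵐ ξ ∂μ, xibar ξ = conj ξ)
    (f : Lp ℂ 2 μ) : ⟪xibar, f⟫_ℂ = ∫ ξ, ξ * f ξ ∂μ := by
  rw [L2.inner_def]
  refine integral_congr_ae ?_
  filter_upwards [hxibar] with ξ h
  simp [h, mul_comm]

lemma inner_self_eq_one_of_ae_eq_one [IsProbabilityMeasure μ] (hone : ∀ᵐ ξ ∂μ, one ξ = 1) :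
    ⟪one, one⟫_ℂ = 1 := by
  rw [inner_eq_integral_of_ae_eq_one hone, integral_congr_ae hone]
  simp

lemma norm_eq_one_of_ae_eq_one [IsProbabilityMeasure μ] (hone : ∀ᵐ ξ ∂μ, one ξ = 1) :
    ‖one‖ = 1 := by
  rw [norm_eq_sqrt_re_inner (𝕜 := ℂ), inner_self_eq_one_of_ae_eq_one hone]
  simp

lemma inner_one_mxi_apply (hMxi : ∀ f : Lp ℂ 2 μ, ∀ᵐ ξ ∂μ, (Mxi f) ξ = ξ * f ξ)
    (hone : ∀ᵐ ξ ∂μ, one ξ = 1) (hxibar : ∀ᵐ ξ ∂μ, xibar ξ = conj ξ) (f : Lp ℂ 2 μ) :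
    ⟪one, Mxi f⟫_ℂ = ⟪xibar, f⟫_ℂ := by
  rw [inner_eq_integral_of_ae_eq_one hone, inner_eq_integral_mul_of_ae_eq_conj hxibar]
  exact integral_congr_ae (hMxi f)

lemma norm_mxi_apply (hμ : ∀ᵐ ξ ∂μ, ‖ξ‖ = 1)
    (hMxi : ∀ f : Lp ℂ 2 μ, ∀ᵐ ξ ∂μ, (Mxi f) ξ = ξ * f ξ) (f : Lp ℂ 2 μ) :
    ‖Mxi f‖ = ‖f‖ := by
  simp only [Lp.norm_def]
  congr 1
  refine eLpNorm_congr_norm_ae ?_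
  filter_upwards [hMxi f, hμ] with ξ h1 h2
  rw [h1, norm_mul, h2, one_mul]

lemma clarkOp_apply (f : Lp ℂ 2 μ) :
    clarkOp μ Mxi xibar one γ f = Mxi f + ((γ - 1) * ⟪xibar, f⟫_ℂ) • one := by
  simp [clarkOp, smul_smul]

lemma clarkOp_apply_ae (hMxi : ∀ f : Lp ℂ 2 μ, ∀ᵐ ξ ∂μ, (Mxi f) ξ = ξ * f ξ)
    (hone : ∀ᵐ ξ ∂μ, one ξ = 1) (f : Lp ℂ 2 μ) :
    clarkOp μ Mxi xibar one γ f =ᵐ[μ] fun ξ => ξ * f ξ + (γ - 1) * ⟪xibar, f⟫_ℂ := by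
  rw [clarkOp_apply]
  filter_upwards [Lp.coeFn_add (Mxi f) (((γ - 1) * ⟪xibar, f⟫_ℂ) • one),
    Lp.coeFn_smul ((γ - 1) * ⟪xibar, f⟫_ℂ) one, hMxi f, hone] with ξ h1 h2 h3 h4
  rw [h1, Pi.add_apply, h3, h2, Pi.smul_apply, smul_eq_mul, h4, mul_one]

lemma inner_one_clarkOp_apply [IsProbabilityMeasure μ]
    (hMxi : ∀ f : Lp ℂ 2 μ, ∀ᵐ ξ ∂μ, (Mxi f) ξ = ξ * f ξ)
    (hone : ∀ᵐ ξ ∂μ, one ξ = 1) (hxibar : ∀ᵐ ξ ∂μ, xibar ξ = conj ξ) (f : Lp ℂ 2 μ) :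
    ⟪one, clarkOp μ Mxi xibar one γ f⟫_ℂ = γ * ⟪xibar, f⟫_ℂ := by
  rw [clarkOp_apply, inner_add_right, inner_smul_right, inner_self_eq_one_of_ae_eq_one hone,
    inner_one_mxi_apply hMxi hone hxibar]
  ring

lemma norm_clarkOp_apply [IsProbabilityMeasure μ] (hμ : ∀ᵐ ξ ∂μ, ‖ξ‖ = 1)
    (hMxi : ∀ f : Lp ℂ 2 μ, ∀ᵐ ξ ∂μ, (Mxi f) ξ = ξ * f ξ)
    (hone : ∀ᵐ ξ ∂μ, one ξ = 1) (hxibar : ∀ᵐ ξ ∂μ, xibar ξ = conj ξ) (hγ : ‖γ‖ = 1)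
    (f : Lp ℂ 2 μ) : ‖clarkOp μ Mxi xibar one γ f‖ = ‖f‖ := by
  have hγ' : γ.re * γ.re + γ.im * γ.im = 1 := by
    rw [← Complex.normSq_apply, ← Complex.sq_norm, hγ, one_pow]
  refine (pow_left_inj₀ (norm_nonneg _) (norm_nonneg f) two_ne_zero).mp ?_
  rw [clarkOp_apply, norm_add_sq (𝕜 := ℂ), norm_mxi_apply hμ hMxi, inner_smul_right,
    ← inner_conj_symm (Mxi f) one, inner_one_mxi_apply hMxi hone hxibar, norm_smul,
    norm_eq_one_of_ae_eq_one hone, mul_one, mul_assoc, Complex.mul_conj', norm_mul, mul_pow,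
    Complex.sq_norm (γ - 1), Complex.normSq_apply]
  simp only [RCLike.re_to_complex, ← Complex.ofReal_pow, Complex.re_mul_ofReal, Complex.sub_re,
    Complex.sub_im, Complex.one_re, Complex.one_im]
  linear_combination ‖⟪xibar, f⟫_ℂ‖ ^ 2 * hγ'

lemma norm_clarkOp_le [IsProbabilityMeasure μ] (hμ : ∀ᵐ ξ ∂μ, ‖ξ‖ = 1)
    (hMxi : ∀ f : Lp ℂ 2 μ, ∀ᵐ ξ ∂μ, (Mxi f) ξ = ξ * f ξ)
    (hone : ∀ᵐ ξ ∂μ, one ξ = 1) (hxibar : ∀ᵐ ξ ∂μ, xibar ξ = conj ξ) (hγ : ‖γ‖ = 1) :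
    ‖clarkOp μ Mxi xibar one γ‖ ≤ 1 :=
  opNorm_le_bound _ zero_le_one fun f => by
    rw [norm_clarkOp_apply hμ hMxi hone hxibar hγ, one_mul]

lemma exists_integral_clark_eq [IsProbabilityMeasure μ] (hμ : ∀ᵐ ξ ∂μ, ‖ξ‖ = 1)
    (hMxi : ∀ f : Lp ℂ 2 μ, ∀ᵐ ξ ∂μ, (Mxi f) ξ = ξ * f ξ)
    (hone : ∀ᵐ ξ ∂μ, one ξ = 1) (hxibar : ∀ᵐ ξ ∂μ, xibar ξ = conj ξ) (hγ : ‖γ‖ = 1)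
    {μγ : Measure ℂ} [IsProbabilityMeasure μγ] (hμγ : ∀ᵐ ξ ∂μγ, ‖ξ‖ = 1)
    (hmom : ∀ n : ℕ, ⟪one, (clarkOp μ Mxi xibar one γ ^ n) one⟫_ℂ = ∫ ξ, ξ ^ n ∂μγ)
    {ζ : ℂ} (hζ : ‖ζ‖ < 1) :
    ∃ a : ℂ, ∫ ξ, (1 - ξ * ζ)⁻¹ ∂μγ = a * ∫ ξ, (1 - ξ * ζ)⁻¹ ∂μ ∧
      ∫ ξ, ξ * (1 - ξ * ζ)⁻¹ ∂μγ = γ * a * ∫ ξ, ξ * (1 - ξ * ζ)⁻¹ ∂μ ∧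
      a = 1 + ζ * (γ - 1) * a * ∫ ξ, ξ * (1 - ξ * ζ)⁻¹ ∂μ := by
  set U := clarkOp μ Mxi xibar one γ
  have hU := norm_clarkOp_le hμ hMxi hone hxibar hγ
  have hζU : ‖ζ • U‖ < 1 :=
    (norm_smul_le ζ U).trans_lt (by nlinarith [norm_nonneg ζ, norm_nonneg U])
  set h := (∑' n : ℕ, (ζ • U) ^ n) one
  have hres : h - ζ • U h = one := by
    simpa [h, sub_mul] using congrArg (· one) (mul_neg_geom_series _ hζU)
  set a := 1 + ζ * (γ - 1) * ⟪xibar, h⟫_ℂ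
  have hpt : ∀ᵐ ξ ∂μ, h ξ = a * (1 - ξ * ζ)⁻¹ := by
    have hres' := congrArg (fun g : Lp ℂ 2 μ => (g : ℂ → ℂ)) hres
    filter_upwards [Lp.coeFn_sub h (ζ • U h), Lp.coeFn_smul ζ (U h),
      clarkOp_apply_ae hMxi hone h, hone, hμ] with ξ h1 h2 h3 h4 h5
    have hξ : h ξ - ζ * (ξ * h ξ + (γ - 1) * ⟪xibar, h⟫_ℂ) = 1 := by
      rw [← h3, ← smul_eq_mul, ← Pi.smul_apply, ← h2, ← Pi.sub_apply, ← h1, hres', h4]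
    rw [eq_mul_inv_iff_mul_eq₀ (one_sub_mul_ne_zero_of_norm_eq_one h5 hζ)]
    linear_combination hξ
  have hS : ⟪one, h⟫_ℂ = a * ∫ ξ, (1 - ξ * ζ)⁻¹ ∂μ := by
    rw [inner_eq_integral_of_ae_eq_one hone, integral_congr_ae hpt, integral_const_mul]
  have hW : ⟪xibar, h⟫_ℂ = a * ∫ ξ, ξ * (1 - ξ * ζ)⁻¹ ∂μ := by
    rw [inner_eq_integral_mul_of_ae_eq_conj hxibar, ← integral_const_mul]
    refine integral_congr_ae ?_
    filter_upwards [hpt] with ξ hξ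
    rw [hξ]
    ring
  have hmomγ := inner_pow_tsum_geom_apply_eq_integral hU hμγ hmom hζ
  refine ⟨a, ?_, ?_, ?_⟩
  · rw [← hS]
    simpa using (hmomγ 0).symm
  · rw [mul_assoc, ← hW, ← inner_one_clarkOp_apply hMxi hone hxibar]
    simpa using (hmomγ 1).symm
  · rw [mul_assoc (ζ * (γ - 1)), ← hW]

end ClarkOperator

theorem statement6
    (μ : Measure ℂ) [IsProbabilityMeasure μ] (hμ : μ (Metric.sphere (0:ℂ) 1)ᶜ = 0)
    (Mxi : Lp ℂ 2 μ →L[ℂ] Lp ℂ 2 μ)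
    (hMxi : ∀ f : Lp ℂ 2 μ, ∀ᵐ ξ ∂μ, (Mxi f) ξ = ξ * f ξ)
    (one xibar : Lp ℂ 2 μ)
    (hone : ∀ᵐ ξ ∂μ, one ξ = 1) (hxibar : ∀ᵐ ξ ∂μ, xibar ξ = conj ξ)
    (γ : ℂ) (hγ : ‖γ‖ = 1)
    -- `μγ` is the spectral measure of `Û_γ` with respect to the cyclic vector `1`
    (μγ : Measure ℂ) [IsProbabilityMeasure μγ] (hμγsupp : μγ (Metric.sphere (0:ℂ) 1)ᶜ = 0)
    (hμγmom : ∀ k : ℤ,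
      (inner ℂ one (zpowOp (clarkOp μ Mxi xibar one γ) k one) : ℂ) = ∫ ξ, ξ ^ k ∂μγ)
    (z : ℂ) (hz : z ∉ Metric.sphere (0:ℂ) 1) :
    cauchyT μ xibarFun z * cauchyT μγ oneFun z =
      γ * cauchyT μγ xibarFun z * cauchyT μ oneFun z := by
  have hμc := ae_norm_eq_one_of_measure_compl_sphere hμ
  have hμγc := ae_norm_eq_one_of_measure_compl_sphere hμγsupp
  have hmom (n : ℕ) : ⟪one, (clarkOp μ Mxi xibar one γ ^ n) one⟫_ℂ = ∫ ξ, ξ ^ n ∂μγ := by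
    simpa [zpowOp] using hμγmom n
  have hγγ : γ * conj γ = 1 := by
    rw [Complex.mul_conj', hγ]
    simp
  rcases (show ‖z‖ ≠ 1 by simpa using hz).lt_or_gt with hlt | hgt
  · obtain ⟨a, hS, hW, -⟩ :=
      exists_integral_clark_eq hμc hMxi hone hxibar hγ hμγc hmom (ζ := conj z) (by simpa)
    simp only [cauchyT_oneFun_eq_conj, cauchyT_xibarFun_eq_conj, hS, hW, map_mul]
    set S := ∫ ξ, (1 - ξ * conj z)⁻¹ ∂μ
    set W := ∫ ξ, ξ * (1 - ξ * conj z)⁻¹ ∂μ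
    linear_combination -(conj a * conj W * conj S) * hγγ
  · have hζ : ‖z⁻¹‖ < 1 := by rw [norm_inv]; exact inv_lt_one_of_one_lt₀ hgt
    obtain ⟨a, hS, -, ha⟩ := exists_integral_clark_eq hμc hMxi hone hxibar hγ hμγc hmom hζ
    have hW := mul_integral_mul_inv_one_sub hμc hζ
    rw [cauchyT_oneFun_eq_one_sub hμc hgt, cauchyT_oneFun_eq_one_sub hμγc hgt,
      cauchyT_xibarFun_eq_neg_inv_mul hμc hgt, cauchyT_xibarFun_eq_neg_inv_mul hμγc hgt, hS]
    set S := ∫ ξ, (1 - ξ * z⁻¹)⁻¹ ∂μ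
    linear_combination z⁻¹ * S * ha + z⁻¹ * S * (γ - 1) * a * hW
end
end
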